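/- arXiv:2408.03323 — 5 statements merged into one kernel-verified Lean document; each statement's English description precedes it below -/
import Mathlib

section
/- Let Ω be a nonempty finite set and let p : ℝ^m → Ω → ℝ be a family of probability mass functions (p(λ,x) ≥ 0 for all x and Σ_{x∈Ω} p(λ,x) = 1 for all λ). Fix λ₀ ∈ ℝ^m and suppose there exists a function L : ℝ^m × Ω → ℝ^m such that: (1) for every δλ in some neighborhood of 0 and every x ∈ Ω, (1 + exp(−δλ·L(δλ,x)))⁻¹ · (p(λ₀ + δλ/2, x) + p(λ₀ − δλ/2, x)) = p(λ₀ + δλ/2, x); (2) for each x ∈ Ω the map δλ ↦ L(δλ,x) is continuous at δλ = 0; (3) for each x ∈ Ω the map λ ↦ p(λ,x) is differentiable at λ₀; (4) for each x ∈ Ω with p(λ₀,x) = 0 one has p(λ₀ + δλ, x) = o(‖δλ‖²) as δλ → 0. Define ĝ_{μν} = Σ_{x∈Ω} p(λ₀,x) · L(0,x)_μ · L(0,x)_ν. Then the classical fidelity satisfies F_c(p(λ₀,·), p(λ₀+δλ,·)) = 1 − (1/8) Σ_{μ,ν} ĝ_{μν} δλ_μ δλ_ν + o(‖δλ‖²)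 as δλ → 0. -/
/-!
The optimality condition says that the logit `δ ⬝ L(δ, x)` is the log-likelihood ratio
`log (p(λ₀ + δ/2, x) / p(λ₀ - δ/2, x))`. Differentiating at `δ = 0` gives
`∇p(λ₀, x) = p(λ₀, x) L(0, x)`, so `L(0, x)` is the score and `√p(·, x)` has derivative
`(√p(λ₀, x) / 2) L(0, x)`; at a zero of `p(·, x)` this is where `p = o(‖δ‖²)` is needed.
Since both distributions are normalized, `1 - ∑ₓ √(q x * q' x) = ½ ∑ₓ (√(q' x) - √(q x))²`, and
squaring the first-order expansion of the amplitudes `√p` gives the second-order expansion of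
the fidelity.
-/

open Filter Topology Asymptotics

section

variable {E : Type*} [NormedAddCommGroup E] [NormedSpace ℝ E]

theorem HasFDerivAt.mul_continuousAt_of_eq_zero {u v : E → ℝ} {u' : E →L[ℝ] ℝ} {a : E}
    (hu : HasFDerivAt u u' a) (hua : u a = 0) (hv : ContinuousAt v a) :
    HasFDerivAt (fun x => u x * v x) (v a • u') a := by
  have hv1 : v =O[𝓝 a] fun _ => (1 : ℝ) := hv.tendsto.isBigO_one ℝ
  have hv0 : (fun x => v x - v a) =o[𝓝 a] fun _ => (1 : ℝ) :=
    (isLittleO_one_iff ℝ).mpr (by simpa using hv.tendsto.sub_const (v a))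
  have hrem := (hu.isLittleO.norm_right.mul_isBigO hv1).add
    ((u'.isBigO_sub (𝓝 a) a).norm_right.mul_isLittleO hv0)
  refine .of_isLittleO ((hrem.congr (fun x => ?_) fun x => mul_one _).trans_isBigO
    (isBigO_norm_left.mpr (isBigO_refl _ _)))
  simp only [hua, sub_zero, map_sub, zero_mul, smul_apply, smul_eq_mul]
  ring

theorem HasFDerivAt.isLittleO_sq_sub_sq {g : E → ℝ} {g' : E →L[ℝ] ℝ} {a : E}
    (hg : HasFDerivAt g g' a) :
    (fun h => (g (a + h) - g a) ^ 2 - (g' h) ^ 2) =o[𝓝 0] fun h => ‖h‖ ^ 2 := by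
  have hr := (hasFDerivAt_iff_isLittleO_nhds_zero.mp hg).norm_right
  have hg'O : (fun h => g' h) =O[𝓝 0] fun h => ‖h‖ := by
    simpa using (g'.isBigO_sub (𝓝 0) 0).norm_right
  refine (hr.mul_isBigO (hr.isBigO.add (hg'O.const_mul_left 2))).congr (fun h => ?_)
    fun h => (sq ‖h‖).symm
  ring

theorem hasFDerivAt_smul_of_eq_mul_exp {f t : E → ℝ} {a : E} {ℓ : E →L[ℝ] ℝ}
    (hf : DifferentiableAt ℝ f a) (ht : HasFDerivAt t ℓ 0) (ht0 : t 0 = 0)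
    (hratio : ∀ᶠ h in 𝓝 0,
      f (a - (2 : ℝ)⁻¹ • h) = f (a + (2 : ℝ)⁻¹ • h) * Real.exp (-t h)) :
    HasFDerivAt f (f a • ℓ) a := by
  set D := fderiv ℝ f a
  -- Near `0` the ratio identity factors `f (a + h/2) - f (a - h/2)` as
  -- `f (a + h/2) * (1 - exp (-t h))`; compare the derivatives of both forms at `0`.
  have hshift : ∀ c : ℝ, HasFDerivAt (fun h : E => f (a + c • h)) (c • D) 0 := fun c => by
    have hc : HasFDerivAt (fun h : E => a + c • h) (c • ContinuousLinearMap.id ℝ E) 0 :=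
      ((hasFDerivAt_id 0).const_smul c).const_add a
    have hfa : HasFDerivAt f D (a + c • (0 : E)) := by simpa using hf.hasFDerivAt
    exact (hfa.comp (0 : E) hc).congr_fderiv (by ext; simp)
  have hsymm : HasFDerivAt (fun h => f (a + (2 : ℝ)⁻¹ • h) - f (a - (2 : ℝ)⁻¹ • h)) D 0 := by
    refine ((hshift 2⁻¹).fun_sub (hshift (-2⁻¹))).congr_fderiv ?_ |>.congr_of_eventuallyEq ?_
    · ext h
      simp only [neg_smul, sub_neg_eq_add, add_apply, smul_apply, smul_eq_mul]
      ring
    · exact .of_forall fun h => by simp [sub_eq_add_neg]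
  have hfactored : HasFDerivAt (fun h => f (a + (2 : ℝ)⁻¹ • h) * (1 - Real.exp (-t h)))
      (f a • ℓ) 0 := by
    refine ((hshift 2⁻¹).fun_mul ((ht.fun_neg.exp).const_sub 1)).congr_fderiv ?_
    simp [ht0]
  rw [← hsymm.unique (hfactored.congr_of_eventuallyEq (hratio.mono fun h hh => by
    simp only [hh]; ring))]
  exact hf.hasFDerivAt

theorem hasFDerivAt_sqrt_smul {f : E → ℝ} {a : E} {ℓ : E →L[ℝ] ℝ}
    (hf : HasFDerivAt f (f a • ℓ) a) (hfa : 0 ≤ f a)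
    (hzero : f a = 0 → (fun h => f (a + h)) =o[𝓝 0] fun h => ‖h‖ ^ 2) :
    HasFDerivAt (fun x => √(f x)) ((√(f a) / 2) • ℓ) a := by
  rcases hfa.eq_or_lt with ha | ha
  · rw [← ha, Real.sqrt_zero, zero_div, zero_smul, hasFDerivAt_iff_isLittleO_nhds_zero]
    have := (hzero ha.symm).rpow (r := 1 / 2) one_half_pos (.of_forall fun h => by positivity)
    rw [← isLittleO_norm_right]
    refine this.congr (fun h => ?_) fun h => ?_
    · simp [← ha, Real.sqrt_eq_rpow]
    · rw [← Real.sqrt_eq_rpow, Real.sqrt_sq (norm_nonneg h)]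
  · convert hf.sqrt ha.ne' using 1
    rw [smul_smul]
    congr 1
    field_simp
    exact Real.sq_sqrt ha.le

end

theorem eq_mul_exp_neg_of_inv_one_add_exp_neg_mul {t a b : ℝ}
    (h : (1 + Real.exp (-t))⁻¹ * (a + b) = a) : b = a * Real.exp (-t) := by
  have hpos : 0 < 1 + Real.exp (-t) := by positivity
  field_simp at h
  linarith

theorem sum_sum_sum_mul_mul_eq_sum_mul_sq {ι κ : Type*} [Fintype ι] [Fintype κ]
    (w : κ → ℝ) (v : κ → ι → ℝ) (h : ι → ℝ) :
    ∑ μ, ∑ ν, (∑ x, w x * v x μ * v x ν) * h μ * h ν = ∑ x, w x * (∑ i, v x i * h i) ^ 2 := by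
  simp only [sq, Finset.sum_mul, Finset.mul_sum]
  refine (Finset.sum_congr rfl fun μ _ => Finset.sum_comm).trans (Finset.sum_comm.trans ?_)
  exact Finset.sum_congr rfl fun x _ => Finset.sum_congr rfl fun μ _ =>
    Finset.sum_congr rfl fun ν _ => by ring

theorem classifim_fim_from_optimal_classifier_general
    {Ω : Type*} [Fintype Ω] {m : ℕ}
    (p : (Fin m → ℝ) → Ω → ℝ)
    (hpos : ∀ lam x, 0 ≤ p lam x)
    (hsum : ∀ lam, ∑ x, p lam x = 1)
    (lam0 : Fin m → ℝ)
    (L : (Fin m → ℝ) → Ω → (Fin m → ℝ))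
    (h1 : ∀ᶠ dl in 𝓝 (0 : Fin m → ℝ), ∀ x : Ω,
      (1 + Real.exp (-(∑ i, dl i * L dl x i)))⁻¹ *
        (p (lam0 + dl / 2) x + p (lam0 - dl / 2) x) = p (lam0 + dl / 2) x)
    (h2 : ∀ x : Ω, ContinuousAt (fun dl => L dl x) 0)
    (h3 : ∀ x : Ω, DifferentiableAt ℝ (fun lam => p lam x) lam0)
    (h4 : ∀ x : Ω, p lam0 x = 0 →
      (fun dl : Fin m → ℝ => p (lam0 + dl) x) =o[𝓝 0] fun dl => ‖dl‖ ^ 2) :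
    (fun dl : Fin m → ℝ =>
        (∑ x, Real.sqrt (p lam0 x * p (lam0 + dl) x)) -
          (1 - (1 / 8) * ∑ μ, ∑ ν,
            (∑ x, p lam0 x * L 0 x μ * L 0 x ν) * dl μ * dl ν))
      =o[𝓝 0] fun dl => ‖dl‖ ^ 2 := by
  set ℓ : Ω → (Fin m → ℝ) →L[ℝ] ℝ := fun x => ∑ i, L 0 x i • ContinuousLinearMap.proj i
  have hlogit (x : Ω) : HasFDerivAt (fun dl => ∑ i, dl i * L dl x i) (ℓ x) 0 :=
    .fun_sum fun i _ => (hasFDerivAt_apply i 0).mul_continuousAt_of_eq_zero rfl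
      ((continuous_apply i).continuousAt.comp (h2 x))
  have hp (x : Ω) : HasFDerivAt (fun lam => p lam x) (p lam0 x • ℓ x) lam0 := by
    refine hasFDerivAt_smul_of_eq_mul_exp (h3 x) (hlogit x) (by simp) (h1.mono fun dl h => ?_)
    have hhalf : dl / 2 = (2 : ℝ)⁻¹ • dl := by ext; simp [div_eq_inv_mul]
    simpa [hhalf] using eq_mul_exp_neg_of_inv_one_add_exp_neg_mul (h x)
  have hs (x : Ω) := hasFDerivAt_sqrt_smul (hp x) (hpos lam0 x) (h4 x)
  refine (IsLittleO.fun_sum fun x (_ : x ∈ Finset.univ) =>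
    (hs x).isLittleO_sq_sub_sq.const_mul_left (-1 / 2)).congr (fun dl => ?_) fun _ => rfl
  have hterm (x : Ω) : -1 / 2 * ((√(p (lam0 + dl) x) - √(p lam0 x)) ^ 2 -
      ((√(p lam0 x) / 2) • ℓ x) dl ^ 2) = √(p lam0 x * p (lam0 + dl) x) -
      (p lam0 x + p (lam0 + dl) x) / 2 + 1 / 8 * (p lam0 x * (∑ i, L 0 x i * dl i) ^ 2) := by
    have hℓ : ℓ x dl = ∑ i, L 0 x i * dl i := by simp [ℓ]
    rw [smul_apply, hℓ, smul_eq_mul, Real.sqrt_mul (hpos lam0 x)]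
    linear_combination (-1 / 2 : ℝ) * Real.sq_sqrt (hpos (lam0 + dl) x) +
      (-1 / 2 + (∑ i, L 0 x i * dl i) ^ 2 / 8) * Real.sq_sqrt (hpos lam0 x)
  simp only [hterm, Finset.sum_add_distrib, Finset.sum_sub_distrib, ← Finset.sum_div, hsum,
    ← Finset.mul_sum, sum_sum_sum_mul_mul_eq_sum_mul_sq]
  ring

/-- Paper's Theorem 1: the output of an optimal binary classifier recovers the
Fisher Information Metric, defined as the second-order coefficient in the Taylor
expansion of the classical fidelity. -/
theorem classifim_fim_from_optimal_classifier
    {Ω : Type*} [Fintype Ω] [Nonempty Ω] {m : ℕ}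
    (p : (Fin m → ℝ) → Ω → ℝ)
    (hpos : ∀ lam x, 0 ≤ p lam x)
    (hsum : ∀ lam, ∑ x, p lam x = 1)
    (lam0 : Fin m → ℝ)
    (L : (Fin m → ℝ) → Ω → (Fin m → ℝ))
    (h1 : ∀ᶠ dl in 𝓝 (0 : Fin m → ℝ), ∀ x : Ω,
      (1 + Real.exp (-(∑ i, dl i * L dl x i)))⁻¹ *
        (p (lam0 + dl / 2) x + p (lam0 - dl / 2) x) = p (lam0 + dl / 2) x)
    (h2 : ∀ x : Ω, ContinuousAt (fun dl => L dl x) 0)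
    (h3 : ∀ x : Ω, DifferentiableAt ℝ (fun lam => p lam x) lam0)
    (h4 : ∀ x : Ω, p lam0 x = 0 →
      (fun dl : Fin m → ℝ => p (lam0 + dl) x) =o[𝓝 0] fun dl => ‖dl‖ ^ 2) :
    (fun dl : Fin m → ℝ =>
        (∑ x, Real.sqrt (p lam0 x * p (lam0 + dl) x)) -
          (1 - (1 / 8) * ∑ μ, ∑ ν,
            (∑ x, p lam0 x * L 0 x μ * L 0 x ν) * dl μ * dl ν))
      =o[𝓝 0] fun dl => ‖dl‖ ^ 2 :=
  classifim_fim_from_optimal_classifier_general p hpos hsum lam0 L h1 h2 h3 h4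
end

section
/- Let Ω be a nonempty finite set and let p : ℝ^m → Ω → ℝ be a family of probability mass functions such that: (3) for each x ∈ Ω the map λ ↦ p(λ,x) is differentiable at λ₀; and (4) for each x ∈ Ω with p(λ₀,x) = 0 one has p(λ₀ + δλ, x) = o(‖δλ‖²) as δλ → 0. Fix v ∈ ℝ^m and for t ∈ ℝ and ε ≠ 0 define f_t(ε) = (8/ε²) · (1 − Σ_{x∈Ω} √( p(λ₀ + v·ε·(t − 1/2), x) · p(λ₀ + v·ε·(t + 1/2), x) )). Then lim_{ε→0, ε≠0} ( f_{1/2}(ε) − f₀(ε) ) = 0. -/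
/-!
Write `g_x(s) = √p(λ₀ + s v, x)`. For probability vectors `1 - Σ √(a b) = ½ Σ (√a - √b)²`, so
`f_{1/2}(ε) = 4 Σ_x ((g_x(ε) - g_x(0)) / ε)²` and `f₀(ε) = 4 Σ_x ((g_x(ε/2) - g_x(-ε/2)) / ε)²`.
Each `g_x` is differentiable at `0`: where `p(λ₀, x) > 0` by the chain rule, and where
`p(λ₀, x) = 0` because `p = o(‖δλ‖²)` makes `g_x(s) = o(s)`. Both difference quotients then
tend to `g_x'(0)`, so the two sums have the same limit.
-/

open Filter Topology Asymptotics

lemma one_sub_sum_sqrt_mul_eq {Ω : Type*} [Fintype Ω] {a b : Ω → ℝ}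
    (ha : ∀ x, 0 ≤ a x) (hb : ∀ x, 0 ≤ b x) (ha1 : ∑ x, a x = 1) (hb1 : ∑ x, b x = 1) :
    1 - ∑ x, √(a x * b x) = (∑ x, (√(a x) - √(b x)) ^ 2) / 2 := by
  have hsq (x : Ω) : (√(a x) - √(b x)) ^ 2 = a x + b x - 2 * √(a x * b x) := by
    rw [sub_sq, Real.sq_sqrt (ha x), Real.sq_sqrt (hb x), Real.sqrt_mul (ha x)]
    ring
  simp only [hsq, Finset.sum_sub_distrib, Finset.sum_add_distrib, ← Finset.mul_sum, ha1, hb1]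
  ring

lemma tendsto_sq_sub_sq_div_sq_of_hasDerivAt {k h : ℝ → ℝ} {d : ℝ}
    (hk : HasDerivAt k d 0) (hh : HasDerivAt h d 0) (hk0 : k 0 = 0) (hh0 : h 0 = 0) :
    Tendsto (fun ε => (k ε ^ 2 - h ε ^ 2) / ε ^ 2) (𝓝[≠] 0) (𝓝 0) := by
  have hk' := hk.tendsto_slope_zero
  have hh' := hh.tendsto_slope_zero
  simp only [zero_add, hk0, hh0, sub_zero, smul_eq_mul] at hk' hh'
  simpa using ((hk'.pow 2).sub (hh'.pow 2)).congr fun ε => by ring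

lemma HasDerivAt.comp_half_sub_comp_neg_half {g : ℝ → ℝ} {d : ℝ} (hg : HasDerivAt g d 0) :
    HasDerivAt (fun ε => g (ε / 2) - g (-(ε / 2))) d 0 := by
  have hhalf : HasDerivAt (fun ε : ℝ => ε / 2) (1 / 2) 0 := (hasDerivAt_id 0).div_const 2
  have h := (hg.comp_of_eq 0 hhalf (by simp)).sub (hg.comp_of_eq 0 hhalf.neg (by simp))
  rwa [← mul_sub, sub_neg_eq_add, add_halves, mul_one] at h

lemma tendsto_fidelity_deficit_sub_symmetric {Ω : Type*} [Fintype Ω] (P : ℝ → Ω → ℝ)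
    (hP : ∀ s x, 0 ≤ P s x) (hP1 : ∀ s, ∑ x, P s x = 1)
    (hd : ∀ x, DifferentiableAt ℝ (fun s => √(P s x)) 0) :
    Tendsto (fun ε => 8 / ε ^ 2 * (1 - ∑ x, √(P 0 x * P ε x))
      - 8 / ε ^ 2 * (1 - ∑ x, √(P (-(ε / 2)) x * P (ε / 2) x))) (𝓝[≠] 0) (𝓝 0) := by
  have hterm (x : Ω) : Tendsto (fun ε => ((√(P ε x) - √(P 0 x)) ^ 2
      - (√(P (ε / 2) x) - √(P (-(ε / 2)) x)) ^ 2) / ε ^ 2) (𝓝[≠] 0) (𝓝 0) :=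
    tendsto_sq_sub_sq_div_sq_of_hasDerivAt ((hd x).hasDerivAt.sub_const _)
      (hd x).hasDerivAt.comp_half_sub_comp_neg_half (sub_self _) (by simp)
  convert (tendsto_finsetSum Finset.univ fun x _ => hterm x).const_mul 4 using 2 with ε
  · rw [one_sub_sum_sqrt_mul_eq (hP _) (hP _) (hP1 _) (hP1 _),
      one_sub_sum_sqrt_mul_eq (hP _) (hP _) (hP1 _) (hP1 _)]
    simp only [Finset.sum_div, Finset.mul_sum, ← Finset.sum_sub_distrib]
    exact Finset.sum_congr rfl fun x _ => by ring
  · simp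

lemma hasDerivAt_sqrt_comp_smul_of_isLittleO {E : Type*} [NormedAddCommGroup E]
    [NormedSpace ℝ E] {q : E → ℝ} (hq : q =o[𝓝 0] fun y => ‖y‖ ^ 2) (v : E) :
    HasDerivAt (fun s : ℝ => √(q (s • v))) 0 0 := by
  have hq0 : q 0 = 0 :=
    IsBigO.eq_zero_of_norm_pow (x₀ := 0) (n := 2) (by simpa using hq.isBigO) two_ne_zero
  have hsqrt : (fun y => √(q y)) =o[𝓝 0] fun y => ‖y‖ := by
    simpa [Real.sqrt_sq (norm_nonneg _)] using hq.sqrt (Eventually.of_forall fun y => by positivity)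
  have hline : (fun s : ℝ => √(q (s • v))) =o[𝓝 0] fun s => ‖s • v‖ :=
    hsqrt.comp_tendsto <|
      (continuous_id.smul continuous_const).tendsto' (0 : ℝ) (0 : E) (zero_smul ℝ v)
  have hnorm : (fun s : ℝ => ‖s • v‖) =O[𝓝 0] fun s => s :=
    .of_bound ‖v‖ <| .of_forall fun s => by simp [norm_smul, mul_comm]
  rw [hasDerivAt_iff_isLittleO_nhds_zero]
  simpa [hq0] using hline.trans_isBigO hnorm

lemma differentiableAt_sqrt_comp_add_smul {E : Type*} [NormedAddCommGroup E] [NormedSpace ℝ E]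
    {q : E → ℝ} {y₀ : E} (hq : DifferentiableAt ℝ q y₀)
    (hq0 : q y₀ = 0 → (fun dy => q (y₀ + dy)) =o[𝓝 0] fun dy => ‖dy‖ ^ 2) (v : E) :
    DifferentiableAt ℝ (fun s : ℝ => √(q (y₀ + s • v))) 0 := by
  by_cases h : q y₀ = 0
  · exact (hasDerivAt_sqrt_comp_smul_of_isLittleO (hq0 h) v).differentiableAt
  · have hline : DifferentiableAt ℝ (fun s : ℝ => q (y₀ + s • v)) 0 :=
      (by simpa using hq : DifferentiableAt ℝ q (y₀ + (0 : ℝ) • v)).comp 0 (by fun_prop)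
    exact hline.sqrt (by simpa using h)

theorem fidelity_deficit_symmetrization_general
    {Ω : Type*} [Fintype Ω] {m : ℕ}
    (p : (Fin m → ℝ) → Ω → ℝ)
    (hpos : ∀ lam x, 0 ≤ p lam x)
    (hsum : ∀ lam, ∑ x, p lam x = 1)
    (lam0 : Fin m → ℝ)
    (h3 : ∀ x : Ω, DifferentiableAt ℝ (fun lam => p lam x) lam0)
    (h4 : ∀ x : Ω, p lam0 x = 0 →
      (fun dl : Fin m → ℝ => p (lam0 + dl) x) =o[𝓝 0] fun dl => ‖dl‖ ^ 2)
    (v : Fin m → ℝ)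
    (f : ℝ → ℝ → ℝ)
    (hf : ∀ t ε, f t ε = (8 / ε ^ 2) *
      (1 - ∑ x, Real.sqrt
        (p (lam0 + (ε * (t - 1 / 2)) • v) x * p (lam0 + (ε * (t + 1 / 2)) • v) x))) :
    Tendsto (fun ε : ℝ => f (1 / 2) ε - f 0 ε) (𝓝[≠] 0) (𝓝 0) := by
  have hsqrt (x : Ω) : DifferentiableAt ℝ (fun s : ℝ => √(p (lam0 + s • v) x)) 0 :=
    differentiableAt_sqrt_comp_add_smul (h3 x) (h4 x) v
  refine (tendsto_fidelity_deficit_sub_symmetric (fun s => p (lam0 + s • v)) (fun _ => hpos _)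
    (fun _ => hsum _) hsqrt).congr fun ε => ?_
  have hscalars : ε * (1 / 2 - 1 / 2) = 0 ∧ ε * (1 / 2 + 1 / 2) = ε ∧
      ε * (0 - 1 / 2) = -(ε / 2) ∧ ε * (0 + 1 / 2) = ε / 2 := by
    refine ⟨?_, ?_, ?_, ?_⟩ <;> ring
  simp only [hf, hscalars]

/-- The symmetrization step in the proof of the paper's Theorem 1: the one-sided
fidelity deficit `f_{1/2}` and its symmetric version `f₀` agree to `o(1)` as `ε → 0`. -/
theorem fidelity_deficit_symmetrization
    {Ω : Type*} [Fintype Ω] [Nonempty Ω] {m : ℕ}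
    (p : (Fin m → ℝ) → Ω → ℝ)
    (hpos : ∀ lam x, 0 ≤ p lam x)
    (hsum : ∀ lam, ∑ x, p lam x = 1)
    (lam0 : Fin m → ℝ)
    (h3 : ∀ x : Ω, DifferentiableAt ℝ (fun lam => p lam x) lam0)
    (h4 : ∀ x : Ω, p lam0 x = 0 →
      (fun dl : Fin m → ℝ => p (lam0 + dl) x) =o[𝓝 0] fun dl => ‖dl‖ ^ 2)
    (v : Fin m → ℝ)
    (f : ℝ → ℝ → ℝ)
    (hf : ∀ t ε, f t ε = (8 / ε ^ 2) *
      (1 - ∑ x, Real.sqrt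
        (p (lam0 + (ε * (t - 1 / 2)) • v) x * p (lam0 + (ε * (t + 1 / 2)) • v) x))) :
    Tendsto (fun ε : ℝ => f (1 / 2) ε - f 0 ε) (𝓝[≠] 0) (𝓝 0) :=
  fidelity_deficit_symmetrization_general p hpos hsum lam0 h3 h4 v f hf
end

section
/- Let Ω be a nonempty finite set and let p : ℝ^m → Ω → ℝ be a family of probability mass functions such that p(λ₀,x) > 0 for every x ∈ Ω and, for each x ∈ Ω, the map λ ↦ p(λ,x) is differentiable at λ₀. Define the score s_μ(x) = ∂_{λ_μ}[ ln p(λ,x) ]|_{λ=λ₀} and the Fisher Information Metric g_{μν} = Σ_{x∈Ω} p(λ₀,x) · s_μ(x) · s_ν(x). Then the classical fidelity satisfies Σ_{x∈Ω} √( p(λ₀,x) · p(λ₀+δλ,x) ) = 1 − (1/8) Σ_{μ,ν} g_{μν} δλ_μ δλ_ν + o(‖δλ‖²) as δλ → 0. -/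
open Filter Topology Asymptotics

/-!
Because both distributions are normalised, the fidelity equals
`1 - ½ ∑ₓ (√p(λ₀ + δλ, x) - √p(λ₀, x))²`, one minus the squared Hellinger distance.
The increment of `√p(·, x)` agrees to first order with its differential
`(√p(λ₀, x) / 2) • d log p(·, x)`, so the squared increments agree with the squared differentials
up to `o(‖δλ‖²)`, and the squared differentials sum over `x` to `¼ g(δλ, δλ)`.
-/

theorem sum_sqrt_mul_eq_one_sub_half_sum_sq {ι : Type*} [Fintype ι] {q q' : ι → ℝ}
    (hq : ∀ x, 0 ≤ q x) (hq' : ∀ x, 0 ≤ q' x) (hq1 : ∑ x, q x = 1) (hq1' : ∑ x, q' x = 1) :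
    ∑ x, √(q x * q' x) = 1 - (1 / 2) * ∑ x, (√(q' x) - √(q x)) ^ 2 := by
  have hterm : ∀ x, (√(q' x) - √(q x)) ^ 2 = q' x + q x - 2 * √(q x * q' x) := by
    intro x
    rw [sub_sq, Real.sq_sqrt (hq' x), Real.sq_sqrt (hq x), Real.sqrt_mul (hq x)]
    ring
  simp only [hterm, Finset.sum_sub_distrib, Finset.sum_add_distrib, ← Finset.mul_sum, hq1, hq1']
  ring

theorem HasFDerivAt.isLittleO_sub_sq_sub_sq {E : Type*} [NormedAddCommGroup E]
    [NormedSpace ℝ E] {f : E → ℝ} {f' : E →L[ℝ] ℝ} {x : E} (hf : HasFDerivAt f f' x) :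
    (fun h => (f (x + h) - f x) ^ 2 - f' h ^ 2) =o[𝓝 0] fun h => ‖h‖ ^ 2 := by
  have hrem := (hasFDerivAt_iff_isLittleO_nhds_zero.mp hf).norm_right
  have hlin : (fun h => f' h) =O[𝓝 0] fun h => ‖h‖ := (f'.isBigO_id _).norm_right
  have hinc : (fun h => f (x + h) - f x) =O[𝓝 0] fun h => ‖h‖ :=
    (hrem.isBigO.add hlin).congr_left fun h => by ring
  -- `a² - b² = (a - b)(a + b)` with `a - b = o(‖h‖)` and `a + b = O(‖h‖)`
  refine (hrem.mul_isBigO (hinc.add hlin)).congr' ?_ ?_ <;>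
    exact .of_forall fun h => by ring

theorem DifferentiableAt.hasFDerivAt_sqrt_eq_smul_fderiv_log {E : Type*} [NormedAddCommGroup E]
    [NormedSpace ℝ E] {f : E → ℝ} {x : E} (hf : DifferentiableAt ℝ f x) (hx : 0 < f x) :
    HasFDerivAt (fun y => √(f y)) ((√(f x) / 2) • fderiv ℝ (fun y => Real.log (f y)) x) x := by
  convert hf.hasFDerivAt.sqrt hx.ne' using 1
  rw [(hf.hasFDerivAt.log hx.ne').fderiv, smul_smul]
  congr 1
  field_simp
  rw [Real.sq_sqrt hx.le]

theorem ContinuousLinearMap.apply_eq_sum_mul_apply_single {ι : Type*} [Fintype ι]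
    [DecidableEq ι] (ℓ : (ι → ℝ) →L[ℝ] ℝ) (v : ι → ℝ) :
    ℓ v = ∑ i, v i * ℓ (Pi.single i 1) := by
  conv_lhs => rw [← Finset.univ_sum_single v]
  simp only [map_sum]
  refine Finset.sum_congr rfl fun i _ => ?_
  rw [← smul_eq_mul, ← map_smul, ← Pi.single_smul', smul_eq_mul, mul_one]

theorem sum_mul_sq_sum_eq_sum_sum {ι κ : Type*} [Fintype ι] [Fintype κ] (w : ι → ℝ)
    (v : κ → ι → ℝ) (c : κ → ℝ) :
    ∑ x, w x * (∑ μ, c μ * v μ x) ^ 2 = ∑ μ, ∑ ν, (∑ x, w x * v μ x * v ν x) * c μ * c ν := by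
  simp only [sq, Finset.mul_sum, Finset.sum_mul]
  rw [Finset.sum_comm]
  refine Finset.sum_congr rfl fun μ _ => ?_
  rw [Finset.sum_comm]
  exact Finset.sum_congr rfl fun ν _ => Finset.sum_congr rfl fun x _ => by ring

theorem fidelity_taylor_fim_general
    {Ω : Type*} [Fintype Ω] {m : ℕ}
    (p : (Fin m → ℝ) → Ω → ℝ)
    (hpos : ∀ lam x, 0 ≤ p lam x)
    (hsum : ∀ lam, ∑ x, p lam x = 1)
    (lam0 : Fin m → ℝ)
    (hpos0 : ∀ x, 0 < p lam0 x)
    (hdiff : ∀ x : Ω, DifferentiableAt ℝ (fun lam => p lam x) lam0)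
    (s : Fin m → Ω → ℝ)
    (hs : ∀ μ x, s μ x = fderiv ℝ (fun lam => Real.log (p lam x)) lam0 (Pi.single μ 1))
    (g : Fin m → Fin m → ℝ)
    (hg : ∀ μ ν, g μ ν = ∑ x, p lam0 x * s μ x * s ν x) :
    (fun dl : Fin m → ℝ =>
        (∑ x, Real.sqrt (p lam0 x * p (lam0 + dl) x)) -
          (1 - (1 / 8) * ∑ μ, ∑ ν, g μ ν * dl μ * dl ν))
      =o[𝓝 0] fun dl => ‖dl‖ ^ 2 := by
  set ℓ : Ω → (Fin m → ℝ) →L[ℝ] ℝ :=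
    fun x => (√(p lam0 x) / 2) • fderiv ℝ (fun lam => Real.log (p lam x)) lam0
  have hℓ : ∀ x, HasFDerivAt (fun lam => √(p lam x)) (ℓ x) lam0 := fun x =>
    (hdiff x).hasFDerivAt_sqrt_eq_smul_fderiv_log (hpos0 x)
  have hquad : ∀ dl, ∑ x, ℓ x dl ^ 2 = (1 / 4) * ∑ μ, ∑ ν, g μ ν * dl μ * dl ν := by
    intro dl
    simp only [hg, ← sum_mul_sq_sum_eq_sum_sum, Finset.mul_sum]
    refine Finset.sum_congr rfl fun x _ => ?_
    rw [smul_apply, ContinuousLinearMap.apply_eq_sum_mul_apply_single, smul_eq_mul, mul_pow,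
      div_pow, Real.sq_sqrt (hpos0 x).le]
    simp only [← hs]
    ring
  have hfid : ∀ dl, (∑ x, √(p lam0 x * p (lam0 + dl) x)) -
      (1 - (1 / 8) * ∑ μ, ∑ ν, g μ ν * dl μ * dl ν) =
        -(1 / 2) * ∑ x, ((√(p (lam0 + dl) x) - √(p lam0 x)) ^ 2 - ℓ x dl ^ 2) := by
    intro dl
    rw [sum_sqrt_mul_eq_one_sub_half_sum_sq (hpos _) (hpos _) (hsum _) (hsum _),
      Finset.sum_sub_distrib, hquad]
    ring
  simp only [hfid]
  exact (IsLittleO.fun_sum fun x _ => (hℓ x).isLittleO_sub_sq_sub_sq).const_mul_left _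

/-- Strictly positive special case of the paper's Theorem 1: the second-order Taylor
coefficient of the classical fidelity is the Fisher Information Metric. -/
theorem fidelity_taylor_fim
    {Ω : Type*} [Fintype Ω] [Nonempty Ω] {m : ℕ}
    (p : (Fin m → ℝ) → Ω → ℝ)
    (hpos : ∀ lam x, 0 ≤ p lam x)
    (hsum : ∀ lam, ∑ x, p lam x = 1)
    (lam0 : Fin m → ℝ)
    (hpos0 : ∀ x, 0 < p lam0 x)
    (hdiff : ∀ x : Ω, DifferentiableAt ℝ (fun lam => p lam x) lam0)
    (s : Fin m → Ω → ℝ)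
    (hs : ∀ μ x, s μ x = fderiv ℝ (fun lam => Real.log (p lam x)) lam0 (Pi.single μ 1))
    (g : Fin m → Fin m → ℝ)
    (hg : ∀ μ ν, g μ ν = ∑ x, p lam0 x * s μ x * s ν x) :
    (fun dl : Fin m → ℝ =>
        (∑ x, Real.sqrt (p lam0 x * p (lam0 + dl) x)) -
          (1 - (1 / 8) * ∑ μ, ∑ ν, g μ ν * dl μ * dl ν))
      =o[𝓝 0] fun dl => ‖dl‖ ^ 2 :=
  fidelity_taylor_fim_general p hpos hsum lam0 hpos0 hdiff s hs g hg
end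

section
/- Let Ω be a nonempty finite set and let p : ℝ → Ω → ℝ be a family of probability mass functions parameterized by a single real parameter λ, such that p(0,x) > 0 for every x ∈ Ω and, for each x ∈ Ω, the map λ ↦ p(λ,x) is differentiable at λ = 0. Let s(x) = (d/dλ)[ ln p(λ,x) ]|_{λ=0} and g(0) = Σ_{x∈Ω} p(0,x) · s(x)². Then lim_{ε→0⁺} (1/(4ε²)) · Σ_{x∈Ω} p(0,x) · ( ln( p(ε,x) / p(−ε,x) ) )² = g(0). -/
/-!
Since `p(0,x) > 0` and `p(·,x)` is continuous at `0`, for small `ε` the log odds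
`ln (p(ε,x) / p(−ε,x)) / (2ε)` is the symmetric difference quotient of the log-likelihood
`λ ↦ ln p(λ,x)`, hence tends to the score `s(x)`. As `Ω` is finite, the limit passes through
the weighted sum of squares, which is the Fisher information.
-/

open Filter Topology

theorem tendsto_neg_nhdsNE_zero {G : Type*} [TopologicalSpace G] [AddGroup G] [ContinuousNeg G] :
    Tendsto (Neg.neg : G → G) (𝓝[≠] 0) (𝓝[≠] 0) :=
  tendsto_nhdsWithin_of_tendsto_nhds_of_eventually_within _
    (by simpa using (continuous_neg.tendsto (0 : G)).mono_left nhdsWithin_le_nhds)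
    (eventually_nhdsWithin_of_forall fun _ h => neg_ne_zero.mpr h)

theorem HasDerivAt.tendsto_symmetric_slope_zero {E : Type*} [NormedAddCommGroup E]
    [NormedSpace ℝ E] {f : ℝ → E} {f' : E} {x : ℝ} (hf : HasDerivAt f f' x) :
    Tendsto (fun t => (2 * t)⁻¹ • (f (x + t) - f (x - t))) (𝓝[≠] 0) (𝓝 f') := by
  have hright := hf.tendsto_slope_zero
  have hleft := hright.comp tendsto_neg_nhdsNE_zero
  have hmean := (hright.add hleft).const_smul (2⁻¹ : ℝ)
  rw [← two_smul ℝ f', smul_smul, inv_mul_cancel₀ two_ne_zero, one_smul] at hmean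
  refine hmean.congr fun t => ?_
  simp only [Function.comp_apply, ← sub_eq_add_neg, inv_neg, neg_smul, ← smul_neg, neg_sub,
    smul_add, smul_smul, mul_inv]
  rw [← smul_add]
  congr 1
  abel

theorem tendsto_log_div_neg_div_two_mul {q : ℝ → ℝ} (hq : DifferentiableAt ℝ q 0)
    (hq0 : 0 < q 0) :
    Tendsto (fun ε => Real.log (q ε / q (-ε)) / (2 * ε)) (𝓝[≠] 0)
      (𝓝 (deriv (fun t => Real.log (q t)) 0)) := by
  have hpos : ∀ᶠ t in 𝓝[≠] (0 : ℝ), 0 < q t :=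
    nhdsWithin_le_nhds (hq.continuousAt.eventually (lt_mem_nhds hq0))
  refine (hq.log hq0.ne').hasDerivAt.tendsto_symmetric_slope_zero.congr' ?_
  filter_upwards [hpos, tendsto_neg_nhdsNE_zero.eventually hpos] with t ht hnt
  rw [Real.log_div ht.ne' hnt.ne', smul_eq_mul, zero_add, zero_sub, div_eq_inv_mul]

theorem classifim_one_dim_general
    {Ω : Type*} [Fintype Ω]
    (p : ℝ → Ω → ℝ)
    (hpos0 : ∀ x, 0 < p 0 x)
    (hdiff : ∀ x : Ω, DifferentiableAt ℝ (fun lam => p lam x) 0)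
    (s : Ω → ℝ)
    (hs : ∀ x, s x = deriv (fun lam => Real.log (p lam x)) 0)
    (g0 : ℝ) (hg0 : g0 = ∑ x, p 0 x * s x ^ 2) :
    Tendsto (fun ε : ℝ =>
        (1 / (4 * ε ^ 2)) * ∑ x, p 0 x * (Real.log (p ε x / p (-ε) x)) ^ 2)
      (𝓝[>] 0) (𝓝 g0) := by
  have hscore : ∀ x, Tendsto (fun ε => Real.log (p ε x / p (-ε) x) / (2 * ε)) (𝓝[>] 0)
      (𝓝 (s x)) := fun x =>
    hs x ▸ (tendsto_log_div_neg_div_two_mul (hdiff x) (hpos0 x)).mono_left (nhdsGT_le_nhdsNE 0)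
  rw [hg0]
  refine (tendsto_finsetSum _ fun x _ => tendsto_const_nhds.mul ((hscore x).pow 2)).congr
    fun ε => ?_
  rw [Finset.mul_sum]
  exact Finset.sum_congr rfl fun x _ => by ring

/-- The one-dimensional ClassiFIM idea: the mean square of the log odds
`ln(P_ε(x)/P_{−ε}(x))` divided by `4ε²` converges to the FIM at `λ = 0`. -/
theorem classifim_one_dim
    {Ω : Type*} [Fintype Ω] [Nonempty Ω]
    (p : ℝ → Ω → ℝ)
    (hpos : ∀ lam x, 0 ≤ p lam x)
    (hsum : ∀ lam, ∑ x, p lam x = 1)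
    (hpos0 : ∀ x, 0 < p 0 x)
    (hdiff : ∀ x : Ω, DifferentiableAt ℝ (fun lam => p lam x) 0)
    (s : Ω → ℝ)
    (hs : ∀ x, s x = deriv (fun lam => Real.log (p lam x)) 0)
    (g0 : ℝ) (hg0 : g0 = ∑ x, p 0 x * s x ^ 2) :
    Tendsto (fun ε : ℝ =>
        (1 / (4 * ε ^ 2)) * ∑ x, p 0 x * (Real.log (p ε x / p (-ε) x)) ^ 2)
      (𝓝[>] 0) (𝓝 g0) :=
  classifim_one_dim_general p hpos0 hdiff s hs g0 hg0
end

section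
/- Let Ω be a nonempty finite set and p a probability mass function on Ω. Let X₁, …, X_N, Y₁, …, Y_N be 2N mutually independent Ω-valued random variables, each with distribution p. For x ∈ Ω set N_x = #{ i ∈ {1,…,N} : X_i = x } and M_x = #{ i ∈ {1,…,N} : Y_i = x }. Then E[ Σ_{x∈Ω} √( N_x · M_x ) ] ≤ N² · Σ_{x∈Ω} p(x)². -/
/-!
Since `√(nm) ≤ nm` for natural numbers, it suffices to bound `E[N_x M_x]`. The product `N_x M_x`
counts the pairs `(i, j)` with `X_i = Y_j = x`, and by independence of `X_i` and `Y_j` each such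
pair occurs with probability `p(x)²`; so `E[N_x M_x] = N² p(x)²`.
-/

open MeasureTheory ProbabilityTheory Finset

lemma Real.sqrt_natCast_le_self (n : ℕ) : √(n : ℝ) ≤ n :=
  Real.sqrt_le_self_iff.2 <| n.eq_zero_or_pos.imp (by exact_mod_cast ·) (by exact_mod_cast ·)

lemma Finset.card_filter_mul_card_filter {α β : Type*} (s : Finset α) (t : Finset β)
    (p : α → Prop) (q : β → Prop) [DecidablePred p] [DecidablePred q] :
    #{a ∈ s | p a} * #{b ∈ t | q b} = #{ab ∈ s ×ˢ t | p ab.1 ∧ q ab.2} := by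
  rw [filter_product, card_product]

lemma natCast_card_filter_eq_sum_indicator {Ω ι : Type*} (s : Finset ι) (P : ι → Ω → Prop)
    [∀ i, DecidablePred (P i)] (ω : Ω) :
    (#{i ∈ s | P i ω} : ℝ) = ∑ i ∈ s, {ω | P i ω}.indicator 1 ω := by
  simp only [natCast_card_filter, Set.indicator_apply, Set.mem_ofPred_eq, Pi.one_apply]

section CountingEvents

variable {Ω ι : Type*} [MeasurableSpace Ω] {μ : Measure Ω} [IsFiniteMeasure μ] (s : Finset ι)
  {P : ι → Ω → Prop} [∀ i, DecidablePred (P i)]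

lemma integrable_card_filter (hP : ∀ i, MeasurableSet {ω | P i ω}) :
    Integrable (fun ω ↦ (#{i ∈ s | P i ω} : ℝ)) μ := by
  simp_rw [natCast_card_filter_eq_sum_indicator]
  exact integrable_finsetSum _ fun i _ ↦ (integrable_const 1).indicator (hP i)

lemma integral_card_filter (hP : ∀ i, MeasurableSet {ω | P i ω}) :
    ∫ ω, (#{i ∈ s | P i ω} : ℝ) ∂μ = ∑ i ∈ s, μ.real {ω | P i ω} := by
  simp_rw [natCast_card_filter_eq_sum_indicator]
  rw [integral_finsetSum _ fun i _ ↦ (integrable_const 1).indicator (hP i)]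
  exact sum_congr rfl fun i _ ↦ integral_indicator_one (hP i)

end CountingEvents

lemma ProbabilityTheory.IndepFun.measureReal_inter_preimage_eq_mul {Ω α β : Type*}
    [MeasurableSpace Ω] {μ : Measure Ω} [MeasurableSpace α] [MeasurableSpace β]
    {f : Ω → α} {g : Ω → β} (h : IndepFun f g μ) {s : Set α} {t : Set β}
    (hs : MeasurableSet s) (ht : MeasurableSet t) :
    μ.real (f ⁻¹' s ∩ g ⁻¹' t) = μ.real (f ⁻¹' s) * μ.real (g ⁻¹' t) := by
  simp [measureReal_def, h.measure_inter_preimage_eq_mul s t hs ht]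

theorem expected_empirical_fidelity_bound_general
    {Ω : Type*} [Fintype Ω] [DecidableEq Ω] [MeasurableSpace Ω] [MeasurableSingletonClass Ω]
    (p : Ω → ℝ)
    {Ω' : Type*} [MeasurableSpace Ω'] (μ : Measure Ω') [IsProbabilityMeasure μ]
    (N : ℕ)
    (Z : Fin N ⊕ Fin N → Ω' → Ω)
    (hmeas : ∀ i, Measurable (Z i))
    (hindep : ProbabilityTheory.iIndepFun Z μ)
    (hdist : ∀ i x, (μ (Z i ⁻¹' {x})).toReal = p x) :
    ∫ ω, ∑ x : Ω, Real.sqrt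
        (((Finset.univ.filter fun i => Z (Sum.inl i) ω = x).card : ℝ) *
          ((Finset.univ.filter fun i => Z (Sum.inr i) ω = x).card : ℝ)) ∂μ
      ≤ (N : ℝ) ^ 2 * ∑ x, p x ^ 2 := by
  have hevent (x : Ω) (ij : Fin N × Fin N) :
      MeasurableSet {ω | Z (.inl ij.1) ω = x ∧ Z (.inr ij.2) ω = x} :=
    (hmeas _ (measurableSet_singleton x)).inter (hmeas _ (measurableSet_singleton x))
  have hpair (x : Ω) (ij : Fin N × Fin N) :
      μ.real {ω | Z (.inl ij.1) ω = x ∧ Z (.inr ij.2) ω = x} = p x * p x := by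
    refine ((hindep.indepFun Sum.inl_ne_inr).measureReal_inter_preimage_eq_mul
      (measurableSet_singleton x) (measurableSet_singleton x)).trans ?_
    simp only [measureReal_def, hdist]
  calc _ ≤ ∫ ω, ∑ x,
          (#{ij ∈ univ ×ˢ univ | Z (.inl ij.1) ω = x ∧ Z (.inr ij.2) ω = x} : ℝ) ∂μ := by
        refine integral_mono_of_nonneg (.of_forall fun ω ↦ by positivity)
          (integrable_finsetSum _ fun x _ ↦ integrable_card_filter _ (hevent x))
          (.of_forall fun ω ↦ sum_le_sum fun x _ ↦ ?_)
        rw [← Nat.cast_mul, card_filter_mul_card_filter]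
        exact Real.sqrt_natCast_le_self _
    _ = ∑ x, ∑ _ij ∈ (univ ×ˢ univ : Finset (Fin N × Fin N)), p x * p x := by
        rw [integral_finsetSum _ fun x _ ↦ integrable_card_filter _ (hevent x)]
        simp_rw [integral_card_filter _ (hevent _), hpair]
    _ = (N : ℝ) ^ 2 * ∑ x, p x ^ 2 := by
        simp [mul_sum, sq]

/-- Bound on the expected empirical fidelity between two independent empirical samples
from the same distribution: `E[Σ_x √(N_x · M_x)] ≤ N² Σ_x p(x)²`. -/
theorem expected_empirical_fidelity_bound
    {Ω : Type*} [Fintype Ω] [Nonempty Ω] [DecidableEq Ω] [MeasurableSpace Ω] [MeasurableSingletonClass Ω]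
    (p : Ω → ℝ) (hp : ∀ x, 0 ≤ p x) (hpsum : ∑ x, p x = 1)
    {Ω' : Type*} [MeasurableSpace Ω'] (μ : Measure Ω') [IsProbabilityMeasure μ]
    (N : ℕ) (hN : 0 < N)
    (Z : Fin N ⊕ Fin N → Ω' → Ω)
    (hmeas : ∀ i, Measurable (Z i))
    (hindep : ProbabilityTheory.iIndepFun Z μ)
    (hdist : ∀ i x, (μ (Z i ⁻¹' {x})).toReal = p x) :
    ∫ ω, ∑ x : Ω, Real.sqrt
        (((Finset.univ.filter fun i => Z (Sum.inl i) ω = x).card : ℝ) *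
          ((Finset.univ.filter fun i => Z (Sum.inr i) ω = x).card : ℝ)) ∂μ
      ≤ (N : ℝ) ^ 2 * ∑ x, p x ^ 2 :=
  expected_empirical_fidelity_bound_general p μ N Z hmeas hindep hdist
end
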